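/- arXiv:2011.07256 — 2 statements merged into one kernel-verified Lean document; each statement's English description precedes it below -/
import Mathlib

section
/- Let N be a positive integer, a ∈ ℝ, δ > 0, α₁ > 0, λ_n = n²π², b_n = √2/(nπ). Let P ∈ ℝ^{(2N+1)×(2N+1)} be symmetric positive definite, F ∈ ℝ^{(2N+1)×(2N+1)}, 𝓛 ∈ ℝ^{2N+1}, K ∈ ℝ^{1×(2N+1)}, and assume the LMI of the previous statement: [[Φ, P𝓛, 0], [𝓛ᵀP, −2(λ_{N+1} − a − δ), 1], [0, 1, −α₁·λ_{N+1}^{−3/4}]] < 0 with Φ = PF + FᵀP + 2δP + (4α₁/(√N·π^{3/2}))·KᵀK, together with λ_{N+1}^{1/4} ≥ 3/(8α₁). Let X : [0,∞) → ℝ^{2N+1} be continuously differentiable, w_n : [0,∞) → ℝ (n > N) continuously differentiable, and ζ : [0,∞) → ℝ satisfy Ẋ(t) = F·X(t) + 𝓛·ζ(t), ẇ_n(t) = (−λ_n + a)·w_n(t) − b_n·K·X(t) for all n > N, and ζ(t)² ≤ ∑_{n=N+1}^∞ λ_n·w_n(t)² for all t ≥ 0. Assume moreover that ∑_{n=N+1}^∞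 λ_n²·w_n(t)² is finite and locally bounded in t, and that V(t) = X(t)ᵀP·X(t) + ∑_{n=N+1}^∞ λ_n·w_n(t)² is differentiable with V̇(t) = 2X(t)ᵀP·Ẋ(t) + ∑_{n=N+1}^∞ 2λ_n·w_n(t)·ẇ_n(t) (term-by-term differentiation of the tail series is valid). Then V(t) ≤ e^{−2δt}·V(0) for all t ≥ 0. -/
open Real Matrix

/-
The closed loop is dissipative for `V = XᵀPX + ∑ λ_n w_n²`. In each tail mode the cross term
`2√2 q² w_n (K X)` (with `q = λ_n^{1/4}`) is absorbed by Young's inequality into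
`q⁷ w_n² / α₁ + 2 α₁ (K X)² / q³`; since `q ↦ q³/α₁ - 2q⁴` is decreasing once `q ≥ 3/(8α₁)`,
the `w_n²` part is dominated by its value at `n = N + 1`, and the remaining weights
`λ_n^{-3/4} = (nπ)^{-3/2}` telescope to at most `2/(√N π^{3/2})`. What is left is the quadratic
form `Xᵀ Φ X + 2ζ (P𝓛)ᵀX + c ζ²` with `c ≤ 0` and `ζ² ≤ ∑ λ_n w_n²`, which the LMI makes
nonpositive after eliminating its last coordinate (a Schur complement). Hence
`V̇ + 2δV ≤ 0`, and `e^{2δt} V(t)` is antitone.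
-/

theorem le_exp_mul_of_hasDerivAt_add_mul_nonpos {V D : ℝ → ℝ} {c : ℝ}
    (hV : ∀ t, 0 ≤ t → HasDerivAt V (D t) t) (hD : ∀ t, 0 ≤ t → D t + c * V t ≤ 0) {t : ℝ}
    (ht : 0 ≤ t) : V t ≤ exp (-c * t) * V 0 := by
  have hg : ∀ s, 0 ≤ s →
      HasDerivAt (fun s => exp (c * s) * V s) (exp (c * s) * (D s + c * V s)) s := fun s hs =>
    (((hasDerivAt_id s).const_mul c).exp.mul (hV s hs)).congr_deriv (by simp; ring)
  have anti : AntitoneOn (fun s => exp (c * s) * V s) (Set.Ici 0) := by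
    refine antitoneOn_of_hasDerivWithinAt_nonpos (f' := fun s => exp (c * s) * (D s + c * V s))
      (convex_Ici 0)
      (fun s hs => (hg s hs).continuousAt.continuousWithinAt) (fun s hs => ?_) (fun s hs => ?_)
    all_goals rw [interior_Ici] at hs
    · exact (hg s (le_of_lt hs)).hasDerivWithinAt
    · exact mul_nonpos_of_nonneg_of_nonpos (exp_nonneg _) (hD s hs.le)
  have h0 := anti Set.self_mem_Ici ht ht
  simp only [mul_zero, exp_zero, one_mul] at h0
  rwa [neg_mul, Real.exp_neg, inv_mul_eq_div, le_div_iff₀ (exp_pos _), mul_comm]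

namespace Matrix

variable {ι : Type*} [Fintype ι]

theorem dotProduct_fromBlocks_mulVec_sumElim (Φ : Matrix ι ι ℝ)
    (v x : ι → ℝ) (d e s r : ℝ) :
    Sum.elim x ![s, r] ⬝ᵥ fromBlocks Φ (of fun i (j : Fin 2) => if j = 0 then v i else 0)
      (of fun (i : Fin 2) j => if i = 0 then v j else 0) !![d, 1; 1, e] *ᵥ Sum.elim x ![s, r]
      = x ⬝ᵥ Φ *ᵥ x + 2 * s * (v ⬝ᵥ x) + d * s ^ 2 + 2 * s * r + e * r ^ 2 := by
  have hB : (of fun i (j : Fin 2) => if j = 0 then v i else 0) *ᵥ ![s, r] = s • v := by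
    ext i; simp [mulVec, dotProduct, mul_comm]
  rw [fromBlocks_mulVec, Sum.elim_comp_inl, Sum.elim_comp_inr, sumElim_dotProduct_sumElim,
    dotProduct_add, hB, dotProduct_smul, dotProduct_comm x v]
  simp [dotProduct, mulVec, Fin.sum_univ_two]
  ring

/-- Evaluate the form at `(x, s, -s / e)`, which eliminates the last coordinate. For `e = 0`
that vector is `(x, s, 0)` and the claim still holds, reading `0⁻¹ = 0`. -/
theorem quadForm_le_of_posSemidef_neg_fromBlocks {Φ : Matrix ι ι ℝ} {v : ι → ℝ} {d e : ℝ}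
    (h : (-fromBlocks Φ (of fun i (j : Fin 2) => if j = 0 then v i else 0)
      (of fun (i : Fin 2) j => if i = 0 then v j else 0) !![d, 1; 1, e]).PosSemidef)
    (x : ι → ℝ) (s : ℝ) : x ⬝ᵥ Φ *ᵥ x + 2 * s * (v ⬝ᵥ x) + (d - e⁻¹) * s ^ 2 ≤ 0 := by
  have key := h.dotProduct_mulVec_nonneg (Sum.elim x ![s, -s / e])
  rw [star_trivial, neg_mulVec, dotProduct_neg, neg_nonneg, dotProduct_fromBlocks_mulVec_sumElim]
    at key
  rcases eq_or_ne e 0 with rfl | he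
  · simpa using key
  · have hr : 2 * s * (-s / e) + e * (-s / e) ^ 2 = -e⁻¹ * s ^ 2 := by
      field_simp
      ring
    linarith

theorem dotProduct_vecMulVec_self_mulVec (K x : ι → ℝ) :
    x ⬝ᵥ vecMulVec K K *ᵥ x = (K ⬝ᵥ x) ^ 2 := by
  rw [vecMulVec_mulVec, dotProduct_comm]
  simp [sq]

theorem dotProduct_transpose_mul_mulVec {P : Matrix ι ι ℝ}
    (hP : P.IsSymm) (F : Matrix ι ι ℝ) (x : ι → ℝ) :
    x ⬝ᵥ (Fᵀ * P) *ᵥ x = x ⬝ᵥ (P * F) *ᵥ x := by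
  rw [← mulVec_mulVec, ← mulVec_mulVec, dotProduct_mulVec, vecMul_transpose, dotProduct_comm,
    dotProduct_mulVec, ← vecMul_transpose, hP.eq, dotProduct_mulVec, dotProduct_mulVec]

theorem dotProduct_lyapunov_mulVec {P : Matrix ι ι ℝ} (hP : P.IsSymm)
    (F : Matrix ι ι ℝ) (c κ : ℝ) (K x : ι → ℝ) :
    x ⬝ᵥ (P * F + Fᵀ * P + c • P + κ • vecMulVec K K) *ᵥ x
      = 2 * (x ⬝ᵥ P *ᵥ (F *ᵥ x)) + c * (x ⬝ᵥ P *ᵥ x) + κ * (K ⬝ᵥ x) ^ 2 := by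
  simp only [add_mulVec, dotProduct_add, smul_mulVec, dotProduct_smul, smul_eq_mul,
    dotProduct_transpose_mul_mulVec hP, dotProduct_vecMulVec_self_mulVec, mulVec_mulVec]
  ring

end Matrix

namespace Real

theorem sqrt_pow_three {y : ℝ} (hy : 0 ≤ y) : √y ^ 3 = y * √y := by
  rw [pow_succ, sq_sqrt hy]

theorem sqrt_pow_four {y : ℝ} (hy : 0 ≤ y) : √y ^ 4 = y ^ 2 := by
  rw [show 4 = 2 * 2 by rfl, pow_mul, sq_sqrt hy]

theorem rpow_three_div_two (x : ℝ) (hx : 0 ≤ x) : x ^ ((3 : ℝ) / 2) = x * √x := by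
  rw [show (3 : ℝ) / 2 = 1 + 1 / 2 by norm_num, rpow_add' hx (by norm_num), rpow_one,
    ← sqrt_eq_rpow]

theorem rpow_one_div_four_sq {y : ℝ} (hy : 0 ≤ y) : (y ^ 2) ^ ((1 : ℝ) / 4) = √y := by
  rw [← rpow_natCast, ← rpow_mul hy, sqrt_eq_rpow]
  norm_num

theorem rpow_neg_three_div_four_sq {y : ℝ} (hy : 0 ≤ y) :
    (y ^ 2) ^ (-(3 / 4 : ℝ)) = (√y ^ 3)⁻¹ := by
  rw [← rpow_natCast, ← rpow_mul hy, sqrt_eq_rpow, ← rpow_natCast, ← rpow_mul hy, ← rpow_neg hy]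
  norm_num

end Real

theorem Summable.mul_of_summable_sq {f g : ℕ → ℝ} (hf : Summable fun k => f k ^ 2)
    (hg : Summable fun k => g k ^ 2) : Summable fun k => f k * g k :=
  ((hf.add hg).div_const 2).of_norm_bounded fun k => by
    rw [norm_mul, Real.norm_eq_abs, Real.norm_eq_abs, ← sq_abs (f k), ← sq_abs (g k)]
    linarith [two_mul_le_add_sq |f k| |g k|]

theorem summable_inv_nat_add_sq (x : ℕ) : Summable fun k : ℕ => ((k : ℝ) + x + 1)⁻¹ ^ 2 := by
  have := (summable_nat_add_iff (x + 1)).2 (Real.summable_nat_pow_inv.2 one_lt_two)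
  refine this.congr fun k => ?_
  push_cast
  rw [inv_pow, add_assoc]

theorem inv_mul_sqrt_add_one_le {x : ℝ} (hx : 0 < x) :
    ((x + 1) * √(x + 1))⁻¹ ≤ 2 / √x - 2 / √(x + 1) := by
  have hp := sqrt_pos.2 hx
  have hs := sqrt_pos.2 (by linarith : 0 < x + 1)
  have hps : √x ≤ √(x + 1) := sqrt_le_sqrt (by linarith)
  have hp2 := sq_sqrt hx.le
  have hs2 := sq_sqrt (by linarith : 0 ≤ x + 1)
  rw [div_sub_div _ _ hp.ne' hs.ne', inv_eq_one_div,
    div_le_div_iff₀ (by positivity) (by positivity)]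
  nlinarith [mul_nonneg (mul_nonneg hs.le (sub_nonneg.2 hps))
    (by positivity : 0 ≤ 2 * √(x + 1) + √x), mul_pos hs hp]

theorem sum_range_inv_mul_sqrt_le {x : ℝ} (hx : 0 < x) (n : ℕ) :
    ∑ k ∈ Finset.range n, (((k : ℝ) + x + 1) * √((k : ℝ) + x + 1))⁻¹
      ≤ 2 / √x - 2 / √(n + x) := by
  induction n with
  | zero => simp
  | succ n ih =>
    rw [Finset.sum_range_succ, Nat.cast_succ, add_right_comm (n : ℝ) 1 x]
    linarith [inv_mul_sqrt_add_one_le (by positivity : 0 < (n : ℝ) + x)]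

theorem summable_inv_mul_sqrt {x : ℝ} (hx : 0 < x) :
    Summable fun k : ℕ => (((k : ℝ) + x + 1) * √((k : ℝ) + x + 1))⁻¹ :=
  summable_of_sum_range_le (fun _ => by positivity) fun n =>
    (sum_range_inv_mul_sqrt_le hx n).trans (sub_le_self _ (by positivity))

theorem tsum_inv_mul_sqrt_le {x : ℝ} (hx : 0 < x) :
    ∑' k : ℕ, (((k : ℝ) + x + 1) * √((k : ℝ) + x + 1))⁻¹ ≤ 2 / √x :=
  tsum_le_of_sum_range_le (fun _ => by positivity) fun n =>
    (sum_range_inv_mul_sqrt_le hx n).trans (sub_le_self _ (by positivity))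

theorem cube_div_sub_two_mul_pow_four_le {α q₁ q : ℝ} (hα : 0 < α) (hq₁ : 3 / (8 * α) ≤ q₁)
    (hq : q₁ ≤ q) : q ^ 3 / α - 2 * q ^ 4 ≤ q₁ ^ 3 / α - 2 * q₁ ^ 4 := by
  have h3 : 3 ≤ 8 * α * q₁ := by rw [div_le_iff₀ (by positivity)] at hq₁; linarith
  have hq₁0 : 0 < q₁ := by nlinarith
  rw [div_sub' hα.ne', div_sub' hα.ne', div_le_div_iff_of_pos_right hα]
  nlinarith [mul_nonneg (mul_nonneg (sq_nonneg (q - q₁))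
      (by positivity : 0 ≤ 2 * q ^ 2 + (q + q₁) ^ 2)) hq₁0.le,
    mul_nonneg (sub_nonneg.2 h3) (sub_nonneg.2 (pow_le_pow_left₀ hq₁0.le hq 4))]

theorem mode_dissipation_le {α q₁ q : ℝ} (hα : 0 < α) (hq₁ : 3 / (8 * α) ≤ q₁) (hq : q₁ ≤ q)
    (a w u : ℝ) :
    2 * q ^ 4 * w * ((-q ^ 4 + a) * w - √2 / q ^ 2 * u)
      ≤ (2 * a - 2 * q₁ ^ 4 + q₁ ^ 3 / α) * (q ^ 4 * w ^ 2) + 2 * α * u ^ 2 / q ^ 3 := by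
  have hq0 : 0 < q := lt_of_lt_of_le (lt_of_lt_of_le (by positivity) hq₁) hq
  have young : -(2 * √2 * q ^ 2 * w * u) ≤ q ^ 7 * w ^ 2 / α + 2 * α * u ^ 2 / q ^ 3 := by
    have hsq : α * q ^ 3 * (q ^ 7 * w ^ 2 / α + 2 * α * u ^ 2 / q ^ 3 + 2 * √2 * q ^ 2 * w * u)
        = (q ^ 5 * w + √2 * α * u) ^ 2 := by
      field_simp
      linear_combination (-α ^ 2 * u ^ 2) * sq_sqrt (zero_le_two : (0 : ℝ) ≤ 2)
    nlinarith [sq_nonneg (q ^ 5 * w + √2 * α * u), mul_pos hα (pow_pos hq0 3)]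
  have hmono := mul_le_mul_of_nonneg_right (cube_div_sub_two_mul_pow_four_le hα hq₁ hq)
    (by positivity : 0 ≤ q ^ 4 * w ^ 2)
  have expand : 2 * q ^ 4 * w * ((-q ^ 4 + a) * w - √2 / q ^ 2 * u)
      = (q ^ 3 / α - 2 * q ^ 4 + 2 * a) * (q ^ 4 * w ^ 2) - q ^ 7 * w ^ 2 / α
        - 2 * √2 * q ^ 2 * w * u := by
    field_simp
    ring
  linarith

/-- `mode_dissipation_le` at `q = √(mπ)`, the fourth root of the eigenvalue `m²π²`. -/
theorem eigenmode_dissipation_le {α m₁ m : ℝ} (hα : 0 < α) (hm₁ : 3 / (8 * α) ≤ √(m₁ * π))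
    (hm : m₁ ≤ m) (a w u : ℝ) :
    2 * (m ^ 2 * π ^ 2) * w * ((-(m ^ 2 * π ^ 2) + a) * w - √2 / (m * π) * u)
      ≤ (2 * a - 2 * (m₁ ^ 2 * π ^ 2) + √(m₁ * π) ^ 3 / α) * (m ^ 2 * π ^ 2 * w ^ 2)
        + 2 * α * u ^ 2 / (π * √π) * (m * √m)⁻¹ := by
  have hm₁0 : 0 < m₁ := by
    have : 0 < √(m₁ * π) := lt_of_lt_of_le (by positivity) hm₁
    exact pos_of_mul_pos_left (sqrt_pos.1 this) pi_pos.le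
  have hm0 : 0 ≤ m := hm₁0.le.trans hm
  have key := mode_dissipation_le hα hm₁
    (sqrt_le_sqrt (mul_le_mul_of_nonneg_right hm pi_pos.le)) a w u
  have hq3 : √(m * π) ^ 3 = m * √m * (π * √π) := by
    rw [sqrt_mul hm0, mul_pow, sqrt_pow_three hm0, sqrt_pow_three pi_pos.le]
  rw [sqrt_pow_four (by positivity), sqrt_pow_four (by positivity), sq_sqrt (by positivity), hq3,
    mul_pow, mul_pow] at key
  convert key using 2
  rw [mul_comm (m * √m), ← div_div (2 * α * u ^ 2) (π * √π), div_eq_mul_inv _ (m * √m)]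

theorem tsum_tail_dissipation_le {N : ℕ} (hN : 0 < N) {a α : ℝ} (hα : 0 < α)
    (hq₁ : 3 / (8 * α) ≤ √(((N : ℝ) + 1) * π)) (w : ℕ → ℝ) (u : ℝ)
    (hsum : Summable fun k : ℕ => (((k : ℝ) + N + 1) ^ 2 * π ^ 2) ^ 2 * w k ^ 2) :
    ∑' k : ℕ, 2 * (((k : ℝ) + N + 1) ^ 2 * π ^ 2) * w k *
        ((-(((k : ℝ) + N + 1) ^ 2 * π ^ 2) + a) * w k - √2 / (((k : ℝ) + N + 1) * π) * u)
      ≤ (2 * a - 2 * (((N : ℝ) + 1) ^ 2 * π ^ 2) + √(((N : ℝ) + 1) * π) ^ 3 / α) *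
          ∑' k : ℕ, ((k : ℝ) + N + 1) ^ 2 * π ^ 2 * w k ^ 2
        + 4 * α / (√N * π ^ ((3 : ℝ) / 2)) * u ^ 2 := by
  have hm : ∀ k : ℕ, (N : ℝ) + 1 ≤ (k : ℝ) + N + 1 := fun k => by
    linarith [k.cast_nonneg (α := ℝ)]
  have hπ : (0 : ℝ) < π := pi_pos
  have heig : ∀ k : ℕ, 1 ≤ ((k : ℝ) + N + 1) ^ 2 * π ^ 2 := fun k =>
    one_le_mul_of_one_le_of_one_le (one_le_pow₀ (by linarith [hm k, N.cast_nonneg (α := ℝ)]))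
      (one_le_pow₀ (by linarith [pi_gt_three]))
  have hG : Summable fun k : ℕ => ((k : ℝ) + N + 1) ^ 2 * π ^ 2 * w k ^ 2 :=
    hsum.of_nonneg_of_le (fun k => by positivity) fun k =>
      (le_mul_of_one_le_left (by positivity) (heig k)).trans_eq (by ring)
  have hmw : Summable fun k : ℕ => ((k : ℝ) + N + 1) * w k := by
    have hsq : Summable fun k : ℕ => (((k : ℝ) + N + 1) ^ 2 * w k) ^ 2 :=
      (hsum.div_const (π ^ 4)).congr fun k => by field_simp
    refine (hsq.mul_of_summable_sq (summable_inv_nat_add_sq N)).congr fun k => ?_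
    field_simp [(by linarith [hm k, N.cast_nonneg (α := ℝ)] : (k : ℝ) + N + 1 ≠ 0)]
  have hA : Summable fun k : ℕ => 2 * (((k : ℝ) + N + 1) ^ 2 * π ^ 2) * w k *
      ((-(((k : ℝ) + N + 1) ^ 2 * π ^ 2) + a) * w k - √2 / (((k : ℝ) + N + 1) * π) * u) :=
    (((hsum.mul_left (-2)).add (hG.mul_left (2 * a))).add
      (hmw.mul_left (-2 * √2 * π * u))).congr fun k => by
        field_simp [(by linarith [hm k, N.cast_nonneg (α := ℝ)] : (k : ℝ) + N + 1 ≠ 0)]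
        ring
  have hN' : (0 : ℝ) < N := Nat.cast_pos.2 hN
  have hH := summable_inv_mul_sqrt hN'
  calc _ ≤ ∑' k : ℕ, ((2 * a - 2 * (((N : ℝ) + 1) ^ 2 * π ^ 2) + √(((N : ℝ) + 1) * π) ^ 3 / α)
          * (((k : ℝ) + N + 1) ^ 2 * π ^ 2 * w k ^ 2)
          + 2 * α * u ^ 2 / (π * √π) * (((k : ℝ) + N + 1) * √((k : ℝ) + N + 1))⁻¹) :=
        hA.tsum_le_tsum (fun k => eigenmode_dissipation_le hα hq₁ (hm k) a (w k) u)
          ((hG.mul_left _).add (hH.mul_left _))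
    _ = (2 * a - 2 * (((N : ℝ) + 1) ^ 2 * π ^ 2) + √(((N : ℝ) + 1) * π) ^ 3 / α) *
          ∑' k : ℕ, ((k : ℝ) + N + 1) ^ 2 * π ^ 2 * w k ^ 2
        + 2 * α * u ^ 2 / (π * √π) * ∑' k : ℕ, (((k : ℝ) + N + 1) * √((k : ℝ) + N + 1))⁻¹ := by
      rw [(hG.mul_left _).tsum_add (hH.mul_left _), tsum_mul_left, tsum_mul_left]
    _ ≤ (2 * a - 2 * (((N : ℝ) + 1) ^ 2 * π ^ 2) + √(((N : ℝ) + 1) * π) ^ 3 / α) *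
          ∑' k : ℕ, ((k : ℝ) + N + 1) ^ 2 * π ^ 2 * w k ^ 2
        + 2 * α * u ^ 2 / (π * √π) * (2 / √N) := by
      gcongr
      exact tsum_inv_mul_sqrt_le hN'
    _ = _ := by
      rw [rpow_three_div_two π hπ.le]
      field_simp
      ring

theorem stmt_13_general (N : ℕ) (hN : 0 < N) (a δ α₁ : ℝ) (hα₁ : 0 < α₁)
    (P F : Matrix (Fin (2 * N + 1)) (Fin (2 * N + 1)) ℝ) (hP : P.PosDef)
    (L K : Fin (2 * N + 1) → ℝ)
    (Φ : Matrix (Fin (2 * N + 1)) (Fin (2 * N + 1)) ℝ)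
    (hΦ : Φ = P * F + Fᵀ * P + (2 * δ) • P
      + (4 * α₁ / (Real.sqrt (N : ℝ) * π ^ ((3 : ℝ) / 2))) • Matrix.vecMulVec K K)
    (M : Matrix (Fin (2 * N + 1) ⊕ Fin 2) (Fin (2 * N + 1) ⊕ Fin 2) ℝ)
    (hM : M = Matrix.fromBlocks Φ
      (Matrix.of fun i (j : Fin 2) => if j = 0 then P.mulVec L i else 0)
      (Matrix.of fun (i : Fin 2) j => if i = 0 then P.mulVec L j else 0)
      !![-2 * (((N : ℝ) + 1) ^ 2 * π ^ 2 - a - δ), 1;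
         1, -α₁ * ((((N : ℝ) + 1) ^ 2 * π ^ 2) ^ (-(3 / 4 : ℝ)))])
    (hLMI : (-M).PosDef)
    (hmono : ((((N : ℝ) + 1) ^ 2 * π ^ 2) ^ ((1 : ℝ) / 4)) ≥ 3 / (8 * α₁))
    (X : ℝ → Fin (2 * N + 1) → ℝ) (w : ℕ → ℝ → ℝ) (ζ : ℝ → ℝ) (V : ℝ → ℝ)
    (hζ : ∀ t : ℝ, 0 ≤ t →
      (ζ t) ^ 2 ≤ ∑' k : ℕ, (((k : ℝ) + (N : ℝ) + 1) ^ 2 * π ^ 2) * (w k t) ^ 2)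
    (hsum : ∀ t : ℝ, Summable
      (fun k : ℕ => ((((k : ℝ) + (N : ℝ) + 1) ^ 2 * π ^ 2) ^ 2) * (w k t) ^ 2))
    (hV : ∀ t : ℝ, V t = X t ⬝ᵥ P.mulVec (X t)
      + ∑' k : ℕ, (((k : ℝ) + (N : ℝ) + 1) ^ 2 * π ^ 2) * (w k t) ^ 2)
    (hV' : ∀ t : ℝ, 0 ≤ t → HasDerivAt V
      (2 * (X t ⬝ᵥ P.mulVec (F.mulVec (X t) + ζ t • L))
        + ∑' k : ℕ, 2 * (((k : ℝ) + (N : ℝ) + 1) ^ 2 * π ^ 2) * w k t *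
          ((-(((k : ℝ) + (N : ℝ) + 1) ^ 2 * π ^ 2) + a) * w k t
            - (Real.sqrt 2 / (((k : ℝ) + (N : ℝ) + 1) * π)) * (K ⬝ᵥ X t))) t) :
    ∀ t : ℝ, 0 ≤ t → V t ≤ Real.exp (-2 * δ * t) * V 0 := by
  have hy : (0 : ℝ) ≤ ((N : ℝ) + 1) * π := by positivity
  rw [← mul_pow, rpow_one_div_four_sq hy] at hmono
  rw [hM, ← mul_pow, rpow_neg_three_div_four_sq hy, mul_pow] at hLMI
  set q := √(((N : ℝ) + 1) * π)
  have hquad : ∀ (x : Fin (2 * N + 1) → ℝ) (s : ℝ), x ⬝ᵥ Φ *ᵥ x + 2 * s * (P *ᵥ L ⬝ᵥ x)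
      + (2 * a - 2 * (((N : ℝ) + 1) ^ 2 * π ^ 2) + q ^ 3 / α₁ + 2 * δ) * s ^ 2 ≤ 0 := by
    intro x s
    convert quadForm_le_of_posSemidef_neg_fromBlocks hLMI.posSemidef x s using 3
    field_simp
    ring
  have hc : 2 * a - 2 * (((N : ℝ) + 1) ^ 2 * π ^ 2) + q ^ 3 / α₁ + 2 * δ ≤ 0 := by
    simpa using hquad 0 1
  have hPt : P.IsSymm := by simpa using hP.isHermitian
  intro T hT
  rw [neg_mul]
  refine le_exp_mul_of_hasDerivAt_add_mul_nonpos hV' (fun t ht => ?_) hT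
  have htail :=
    tsum_tail_dissipation_le (a := a) hN hα₁ hmono (fun k => w k t) (K ⬝ᵥ X t) (hsum t)
  have hΦx := hΦ ▸
    dotProduct_lyapunov_mulVec hPt F (2 * δ) (4 * α₁ / (√N * π ^ ((3 : ℝ) / 2))) K (X t)
  have hG := mul_le_mul_of_nonpos_left (hζ t ht) hc
  have hsplit : X t ⬝ᵥ P *ᵥ (F *ᵥ X t + ζ t • L)
      = X t ⬝ᵥ P *ᵥ (F *ᵥ X t) + ζ t * (P *ᵥ L ⬝ᵥ X t) := by
    rw [mulVec_add, dotProduct_add, mulVec_smul, dotProduct_smul, smul_eq_mul,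
      dotProduct_comm (X t) (P *ᵥ L)]
  rw [hV t, hsplit]
  linear_combination htail + hG + hquad (X t) (ζ t) - hΦx

/-- Lyapunov decay under the LMI (23): with `λ_n = n²π²`, `b_n = √2/(nπ)` (here index
`k` stands for `n = N+1+k`), assume the block LMI of the previous statement and
`λ_{N+1}^{1/4} ≥ 3/(8α₁)`. If `X`, `(w_n)_{n>N}` are continuously differentiable
solutions of the closed-loop system `Ẋ = FX + 𝓛ζ`, `ẇ_n = (−λ_n+a)w_n − b_n KX`, with
`ζ(t)² ≤ ∑ λ_n w_n(t)²`, the tail `∑ λ_n² w_n(t)²` finite and locally bounded, and the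
Lyapunov function `V(t) = X(t)ᵀPX(t) + ∑ λ_n w_n(t)²` differentiable term-by-term, then
`V(t) ≤ e^{−2δt} V(0)` for all `t ≥ 0`. -/
theorem stmt_13 (N : ℕ) (hN : 0 < N) (a δ α₁ : ℝ) (hδ : 0 < δ) (hα₁ : 0 < α₁)
    (P F : Matrix (Fin (2 * N + 1)) (Fin (2 * N + 1)) ℝ) (hP : P.PosDef)
    (L K : Fin (2 * N + 1) → ℝ)
    (Φ : Matrix (Fin (2 * N + 1)) (Fin (2 * N + 1)) ℝ)
    (hΦ : Φ = P * F + Fᵀ * P + (2 * δ) • P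
      + (4 * α₁ / (Real.sqrt (N : ℝ) * π ^ ((3 : ℝ) / 2))) • Matrix.vecMulVec K K)
    (M : Matrix (Fin (2 * N + 1) ⊕ Fin 2) (Fin (2 * N + 1) ⊕ Fin 2) ℝ)
    (hM : M = Matrix.fromBlocks Φ
      (Matrix.of fun i (j : Fin 2) => if j = 0 then P.mulVec L i else 0)
      (Matrix.of fun (i : Fin 2) j => if i = 0 then P.mulVec L j else 0)
      !![-2 * (((N : ℝ) + 1) ^ 2 * π ^ 2 - a - δ), 1;
         1, -α₁ * ((((N : ℝ) + 1) ^ 2 * π ^ 2) ^ (-(3 / 4 : ℝ)))])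
    (hLMI : (-M).PosDef)
    (hmono : ((((N : ℝ) + 1) ^ 2 * π ^ 2) ^ ((1 : ℝ) / 4)) ≥ 3 / (8 * α₁))
    (X : ℝ → Fin (2 * N + 1) → ℝ) (w : ℕ → ℝ → ℝ) (ζ : ℝ → ℝ) (V : ℝ → ℝ)
    (hζc : Continuous ζ)
    (hX : ∀ t : ℝ, 0 ≤ t → HasDerivAt X (F.mulVec (X t) + ζ t • L) t)
    (hw : ∀ (k : ℕ) (t : ℝ), 0 ≤ t → HasDerivAt (w k)
      ((-(((k : ℝ) + (N : ℝ) + 1) ^ 2 * π ^ 2) + a) * w k t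
        - (Real.sqrt 2 / (((k : ℝ) + (N : ℝ) + 1) * π)) * (K ⬝ᵥ X t)) t)
    (hζ : ∀ t : ℝ, 0 ≤ t →
      (ζ t) ^ 2 ≤ ∑' k : ℕ, (((k : ℝ) + (N : ℝ) + 1) ^ 2 * π ^ 2) * (w k t) ^ 2)
    (hsum : ∀ t : ℝ, Summable
      (fun k : ℕ => ((((k : ℝ) + (N : ℝ) + 1) ^ 2 * π ^ 2) ^ 2) * (w k t) ^ 2))
    (hloc : ∀ T : ℝ, 0 ≤ T → ∃ C : ℝ, ∀ t ∈ Set.Icc (0 : ℝ) T,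
      (∑' k : ℕ, ((((k : ℝ) + (N : ℝ) + 1) ^ 2 * π ^ 2) ^ 2) * (w k t) ^ 2) ≤ C)
    (hV : ∀ t : ℝ, V t = X t ⬝ᵥ P.mulVec (X t)
      + ∑' k : ℕ, (((k : ℝ) + (N : ℝ) + 1) ^ 2 * π ^ 2) * (w k t) ^ 2)
    (hV' : ∀ t : ℝ, 0 ≤ t → HasDerivAt V
      (2 * (X t ⬝ᵥ P.mulVec (F.mulVec (X t) + ζ t • L))
        + ∑' k : ℕ, 2 * (((k : ℝ) + (N : ℝ) + 1) ^ 2 * π ^ 2) * w k t *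
          ((-(((k : ℝ) + (N : ℝ) + 1) ^ 2 * π ^ 2) + a) * w k t
            - (Real.sqrt 2 / (((k : ℝ) + (N : ℝ) + 1) * π)) * (K ⬝ᵥ X t))) t) :
    ∀ t : ℝ, 0 ≤ t → V t ≤ Real.exp (-2 * δ * t) * V 0 :=
  stmt_13_general N hN a δ α₁ hα₁ P F hP L K Φ hΦ M hM hLMI hmono X w ζ V hζ hsum hV hV'
end

section
/- Let N be a positive integer, α₁, α₂ > 0 and κ₁, κ₂ ∈ ℝ. Let (w_n)_{n>N} be real numbers with ∑_{n=N+1}^∞ (n²π²)^{7/4}·w_n² < ∞. Then, with λ_n = n²π² and b_n = √2/(nπ), 2·∑_{n=N+1}^∞ λ_n·w_n·b_n·(−κ₁ − κ₂) ≤ (1/α₁ + 1/α₂)·∑_{n=N+1}^∞ λ_n^{7/4}·w_n² + (4α₁/(√N·π^{3/2}))·κ₁² + (4α₂/(√N·π^{3/2}))·κ₂². -/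
/-!
Write `λ_n = (nπ)²` and split each term as `λ_n w_n b_n κ = (λ_n^{7/8} w_n) (√2 λ_n^{-3/8} κ)`.
Young's inequality `2ab ≤ a²/α + α b²`, summed over `n > N`, leaves the series
`2κ² ∑_{n>N} λ_n^{-3/4} = 2κ² π^{-3/2} ∑_{n>N} n^{-3/2}`, and the tail of `∑ n^{-3/2}` is at most
`2/√N` because `n^{-3/2} ≤ 2/√(n-1) - 2/√n` telescopes. Splitting `-κ₁ - κ₂` and applying this
once with `α₁` and once with `α₂` gives the bound.
-/

open Real

theorem rpow_neg_three_halves_add_one_le {x : ℝ} (hx : 0 < x) :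
    (x + 1) ^ (-3 / 2 : ℝ) ≤ 2 / √x - 2 / √(x + 1) := by
  have hs : 0 < √x := sqrt_pos.2 hx
  have ht : 0 < √(x + 1) := sqrt_pos.2 (by linarith)
  have hst : √x ≤ √(x + 1) := sqrt_le_sqrt (by linarith)
  have hsq : √(x + 1) ^ 2 = √x ^ 2 + 1 := by
    rw [sq_sqrt hx.le, sq_sqrt (by linarith)]
  rw [rpow_div_two_eq_sqrt _ (by linarith), neg_eq_neg_one_mul, rpow_mul ht.le, rpow_neg_one,
    show (3 : ℝ) = (3 : ℕ) by norm_num, rpow_natCast, inv_pow, div_sub_div _ _ hs.ne' ht.ne',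
    inv_le_iff_one_le_mul₀ (by positivity), div_mul_eq_mul_div, le_div_iff₀ (by positivity)]
  nlinarith [mul_le_mul_of_nonneg_left hst (by positivity : (0 : ℝ) ≤ √(x + 1) ^ 2)]

theorem sum_range_rpow_neg_three_halves_le {x : ℝ} (hx : 0 < x) (n : ℕ) :
    ∑ k ∈ Finset.range n, ((k : ℝ) + x + 1) ^ (-3 / 2 : ℝ) ≤ 2 / √x := by
  have htel := Finset.sum_range_sub' (fun k : ℕ => 2 / √((k : ℝ) + x)) n
  calc ∑ k ∈ Finset.range n, ((k : ℝ) + x + 1) ^ (-3 / 2 : ℝ)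
      ≤ ∑ k ∈ Finset.range n, (2 / √((k : ℝ) + x) - 2 / √(((k + 1 : ℕ) : ℝ) + x)) := by
        refine Finset.sum_le_sum fun k _ => ?_
        rw [show ((k + 1 : ℕ) : ℝ) + x = k + x + 1 by push_cast; ring]
        exact rpow_neg_three_halves_add_one_le (by positivity)
    _ = 2 / √x - 2 / √((n : ℝ) + x) := by simpa using htel
    _ ≤ 2 / √x := sub_le_self _ (by positivity)

theorem summable_rpow_neg_three_halves {x : ℝ} (hx : 0 < x) :
    Summable fun k : ℕ => ((k : ℝ) + x + 1) ^ (-3 / 2 : ℝ) :=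
  summable_of_sum_range_le (fun _ => by positivity) (sum_range_rpow_neg_three_halves_le hx)

theorem tsum_rpow_neg_three_halves_le {x : ℝ} (hx : 0 < x) :
    ∑' k : ℕ, ((k : ℝ) + x + 1) ^ (-3 / 2 : ℝ) ≤ 2 / √x :=
  Real.tsum_le_of_sum_range_le (fun _ => by positivity) (sum_range_rpow_neg_three_halves_le hx)

theorem summable_mul_of_summable_sq {ι : Type*} {a b : ι → ℝ} (ha : Summable fun i => a i ^ 2)
    (hb : Summable fun i => b i ^ 2) : Summable fun i => a i * b i := by
  refine (ha.add hb).of_norm_bounded fun i => ?_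
  rw [norm_mul, Real.norm_eq_abs, Real.norm_eq_abs, ← sq_abs (a i), ← sq_abs (b i)]
  nlinarith [two_mul_le_add_sq |a i| |b i|, abs_nonneg (a i), abs_nonneg (b i)]

theorem two_mul_tsum_mul_le_add_mul_tsum_sq {ι : Type*} {a b : ι → ℝ} {ε : ℝ} (hε : 0 < ε)
    (ha : Summable fun i => a i ^ 2) (hb : Summable fun i => b i ^ 2) :
    2 * ∑' i, a i * b i ≤ ε * ∑' i, a i ^ 2 + ε⁻¹ * ∑' i, b i ^ 2 := by
  rw [← tsum_mul_left, ← tsum_mul_left, ← tsum_mul_left,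
    ← (ha.mul_left ε).tsum_add (hb.mul_left _)]
  refine Summable.tsum_le_tsum (fun i => ?_) ((summable_mul_of_summable_sq ha hb).mul_left 2)
    ((ha.mul_left ε).add (hb.mul_left _))
  rw [← mul_assoc]
  exact two_mul_le_add_mul_sq hε

theorem sq_mul_div_self_eq_rpow_mul_rpow {μ : ℝ} (hμ : 0 < μ) (u v : ℝ) :
    μ ^ 2 * u * (v / μ) = μ ^ (7 / 4 : ℝ) * u * (μ ^ (-3 / 4 : ℝ) * v) := by
  have h : μ ^ (7 / 4 : ℝ) * μ ^ (-3 / 4 : ℝ) = μ := by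
    rw [← rpow_add hμ]; norm_num
  calc μ ^ 2 * u * (v / μ) = μ * u * v := by field_simp
    _ = μ ^ (7 / 4 : ℝ) * μ ^ (-3 / 4 : ℝ) * u * v := by rw [h]
    _ = _ := by ring

theorem two_mul_tsum_eigenvalue_mul_le {x : ℝ} (hx : 0 < x) {α : ℝ} (hα : 0 < α) (κ : ℝ)
    (w : ℕ → ℝ)
    (hw : Summable fun k : ℕ => ((((k : ℝ) + x + 1) ^ 2 * π ^ 2) ^ ((7 : ℝ) / 4)) * w k ^ 2) :
    2 * ∑' k : ℕ, (((k : ℝ) + x + 1) ^ 2 * π ^ 2) * w k * (√2 / (((k : ℝ) + x + 1) * π)) * κ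
      ≤ 1 / α * ∑' k : ℕ, ((((k : ℝ) + x + 1) ^ 2 * π ^ 2) ^ ((7 : ℝ) / 4)) * w k ^ 2
        + 4 * α / (√x * π ^ ((3 : ℝ) / 2)) * κ ^ 2 := by
  have hμ : ∀ k : ℕ, 0 < ((k : ℝ) + x + 1) * π := fun k => by positivity
  let a (k : ℕ) : ℝ := (((k : ℝ) + x + 1) * π) ^ (7 / 4 : ℝ) * w k
  let b (k : ℕ) : ℝ := (((k : ℝ) + x + 1) * π) ^ (-3 / 4 : ℝ) * (√2 * κ)
  have hab : ∀ k : ℕ, (((k : ℝ) + x + 1) ^ 2 * π ^ 2) * w k * (√2 / (((k : ℝ) + x + 1) * π)) * κ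
      = a k * b k := by
    intro k
    rw [← mul_pow, mul_assoc, div_mul_eq_mul_div, sq_mul_div_self_eq_rpow_mul_rpow (hμ k)]
  have ha : ∀ k : ℕ, (((k : ℝ) + x + 1) ^ 2 * π ^ 2) ^ (7 / 4 : ℝ) * w k ^ 2 = a k ^ 2 := by
    intro k
    rw [mul_pow, ← mul_pow, rpow_pow_comm (hμ k).le]
  have hb : ∀ k : ℕ, b k ^ 2 = 2 * κ ^ 2 / π ^ (3 / 2 : ℝ) * ((k : ℝ) + x + 1) ^ (-3 / 2 : ℝ) := by
    intro k
    rw [mul_pow, mul_pow, sq_sqrt zero_le_two, ← rpow_mul_natCast (hμ k).le,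
      show (-3 / 4 : ℝ) * (2 : ℕ) = -3 / 2 by norm_num, mul_rpow (by positivity) pi_pos.le,
      neg_div, rpow_neg pi_pos.le]
    ring
  have hb_summable : Summable fun k => b k ^ 2 := by
    simpa only [hb] using (summable_rpow_neg_three_halves hx).mul_left _
  have hb_tsum : ∑' k, b k ^ 2 ≤ 2 * κ ^ 2 / π ^ (3 / 2 : ℝ) * (2 / √x) := by
    rw [tsum_congr hb, tsum_mul_left]
    exact mul_le_mul_of_nonneg_left (tsum_rpow_neg_three_halves_le hx) (by positivity)
  calc _ = 2 * ∑' k, a k * b k := by rw [tsum_congr hab]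
    _ ≤ α⁻¹ * ∑' k, a k ^ 2 + α⁻¹⁻¹ * ∑' k, b k ^ 2 :=
        two_mul_tsum_mul_le_add_mul_tsum_sq (inv_pos.2 hα) (by simpa only [ha] using hw)
          hb_summable
    _ ≤ α⁻¹ * ∑' k, a k ^ 2 + α * (2 * κ ^ 2 / π ^ (3 / 2 : ℝ) * (2 / √x)) := by
        rw [inv_inv]; gcongr
    _ = _ := by
        rw [← tsum_congr ha, one_div]
        congr 1
        field_simp
        ring

/-- Sampled-data Young bound with fractional eigenvalue powers: for `N ≥ 1`,
`α₁, α₂ > 0`, `κ₁, κ₂ ∈ ℝ` and reals `(w_n)_{n>N}` (here `w k` stands for `w_{N+1+k}`)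
with `∑ λ_n^{7/4} w_n² < ∞`, where `λ_n = n²π²` and `b_n = √2/(nπ)`,
`2∑ λ_n w_n b_n (−κ₁−κ₂) ≤ (1/α₁+1/α₂)∑ λ_n^{7/4} w_n²
  + (4α₁/(√N π^{3/2}))κ₁² + (4α₂/(√N π^{3/2}))κ₂²`. -/
theorem stmt_14 (N : ℕ+) (α₁ α₂ : ℝ) (hα₁ : 0 < α₁) (hα₂ : 0 < α₂) (κ₁ κ₂ : ℝ)
    (w : ℕ → ℝ)
    (hw : Summable fun k : ℕ =>
      ((((k : ℝ) + (N : ℝ) + 1) ^ 2 * π ^ 2) ^ ((7 : ℝ) / 4)) * (w k) ^ 2) :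
    2 * ∑' k : ℕ, (((k : ℝ) + (N : ℝ) + 1) ^ 2 * π ^ 2) * w k *
        (Real.sqrt 2 / (((k : ℝ) + (N : ℝ) + 1) * π)) * (-κ₁ - κ₂)
      ≤ (1 / α₁ + 1 / α₂) * ∑' k : ℕ,
          ((((k : ℝ) + (N : ℝ) + 1) ^ 2 * π ^ 2) ^ ((7 : ℝ) / 4)) * (w k) ^ 2
        + (4 * α₁ / (Real.sqrt (N : ℝ) * π ^ ((3 : ℝ) / 2))) * κ₁ ^ 2
        + (4 * α₂ / (Real.sqrt (N : ℝ) * π ^ ((3 : ℝ) / 2))) * κ₂ ^ 2 := by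
  have h₁ := two_mul_tsum_eigenvalue_mul_le (x := N) (by positivity) hα₁ (-κ₁) w hw
  have h₂ := two_mul_tsum_eigenvalue_mul_le (x := N) (by positivity) hα₂ (-κ₂) w hw
  rw [tsum_mul_right, neg_sq] at h₁ h₂
  rw [tsum_mul_right]
  linear_combination h₁ + h₂
end
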